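/- Every maximal outer k-planar graph (k ≥ 1) with an outer k-planar drawing admits a triangulation of its outer cycle such that every link (diagonal) of the triangulation is pierced by at most 2k − 1 edges of the graph. -/
import Mathlib


open Classical Real

/-- `x` lies strictly between `a` and `b` in the linear order on `ℝ`
(interpreted as positions along a cut-open circle). -/
def ArcBtw (x a b : ℝ) : Prop := min a b < x ∧ x < max a b

/-- The pairs `{a,b}` and `{c,d}` of positions on the circle are intertwined:
exactly one of `c`, `d` lies on the arc strictly between `a` and `b`. -/
def Intertwined (a b c d : ℝ) : Prop := Xor' (ArcBtw c a b) (ArcBtw d a b)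

/-- The vertex pairs `{a,b}` and `{c,d}` span four distinct vertices and are
intertwined in the cyclic order given by `pos`; equivalently, the corresponding
chords cross in the convex drawing. -/
def CrossPairs {V : Type*} (pos : V → ℝ) (a b c d : V) : Prop :=
  a ≠ c ∧ a ≠ d ∧ b ≠ c ∧ b ≠ d ∧ Intertwined (pos a) (pos b) (pos c) (pos d)

/-- The unordered pair `e` pierces (crosses) the chord `{a,b}`. -/
def Pierces {V : Type*} (pos : V → ℝ) (e : Sym2 V) (a b : V) : Prop :=
  ∃ c d, e = s(c, d) ∧ CrossPairs pos a b c d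

/-- Number of edges of `G` that cross the chord `{a,b}` in the convex drawing `pos`. -/
noncomputable def crossNum {V : Type*} (G : SimpleGraph V) (pos : V → ℝ) (a b : V) : ℕ :=
  {e ∈ G.edgeSet | Pierces pos e a b}.ncard

/-- `pos` is an outer `k`-planar drawing of `G`: a convex drawing (injective
placement on the circle) where every edge is crossed by at most `k` other edges. -/
def IsOuterkPlanarDrawing {V : Type*} (G : SimpleGraph V) (k : ℕ) (pos : V → ℝ) : Prop :=
  Function.Injective pos ∧ ∀ a b, G.Adj a b → crossNum G pos a b ≤ k

/-- `G` is outer `k`-planar. -/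
def IsOuterkPlanar {V : Type*} (G : SimpleGraph V) (k : ℕ) : Prop :=
  ∃ pos : V → ℝ, IsOuterkPlanarDrawing G k pos

/-- `a` and `b` are consecutive in the cyclic order given by `pos`:
one of the two open arcs between them contains no vertex. -/
def ConsecutiveAt {V : Type*} (pos : V → ℝ) (a b : V) : Prop :=
  a ≠ b ∧ ((∀ x, x ≠ a → x ≠ b → ArcBtw (pos x) (pos a) (pos b)) ∨
           (∀ x, x ≠ a → x ≠ b → ¬ ArcBtw (pos x) (pos a) (pos b)))

/-- The unordered pairs `e` and `f` cross in the convex drawing `pos`. -/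
def SymCross {V : Type*} (pos : V → ℝ) (e f : Sym2 V) : Prop :=
  ∃ a b c d, e = s(a, b) ∧ f = s(c, d) ∧ CrossPairs pos a b c d

/-- A triangulation of the convex polygon whose vertices are placed by `pos`:
a maximal set of pairwise non-crossing inner diagonals. Together with the
polygon sides (pairs of consecutive vertices) these are the links of the
triangulation. -/
structure PolyTriangulation {V : Type*} (pos : V → ℝ) where
  diags : Set (Sym2 V)
  diag_proper : ∀ e ∈ diags, ∀ a b : V, e = s(a, b) → a ≠ b ∧ ¬ ConsecutiveAt pos a b
  noncross : ∀ e ∈ diags, ∀ f ∈ diags, ¬ SymCross pos e f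
  maximal : ∀ a b : V, a ≠ b → ¬ ConsecutiveAt pos a b → s(a, b) ∉ diags →
      ∃ e ∈ diags, SymCross pos e s(a, b)

/-- `{a,b}` is a link of the triangulation `T`: a polygon side or a diagonal. -/
def PolyTriangulation.IsLink {V : Type*} {pos : V → ℝ} (T : PolyTriangulation pos)
    (a b : V) : Prop :=
  ConsecutiveAt pos a b ∨ s(a, b) ∈ T.diags

/-- `u`, `v`, `w` form a triangle (face) of the triangulation `T`. -/
def PolyTriangulation.IsTriangle {V : Type*} {pos : V → ℝ} (T : PolyTriangulation pos)
    (u v w : V) : Prop :=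
  u ≠ v ∧ v ≠ w ∧ u ≠ w ∧ T.IsLink u v ∧ T.IsLink v w ∧ T.IsLink u w

/-- `G` is a maximal outer `k`-planar graph: it is outer `k`-planar and adding
any non-edge destroys outer `k`-planarity. -/
def IsMaximalOuterkPlanar {V : Type*} (G : SimpleGraph V) (k : ℕ) : Prop :=
  IsOuterkPlanar G k ∧
    ∀ a b : V, a ≠ b → ¬ G.Adj a b →
      ¬ IsOuterkPlanar (G ⊔ SimpleGraph.fromEdgeSet {s(a, b)}) k

section Basics

variable {V : Type*} (pos : V → ℝ)

lemma arcBtw_symm {x a b : ℝ} : ArcBtw x a b ↔ ArcBtw x b a := by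
  simp [ArcBtw, min_comm, max_comm]

lemma intertwined_swap {a b c d : ℝ} (h : Intertwined a b c d) : Intertwined b a c d := by
  unfold Intertwined at *
  rwa [show ArcBtw c b a ↔ ArcBtw c a b from arcBtw_symm,
    show ArcBtw d b a ↔ ArcBtw d a b from arcBtw_symm]

lemma crossPairs_swapL {a b c d : V} (h : CrossPairs pos a b c d) : CrossPairs pos b a c d :=
  ⟨h.2.2.1, h.2.2.2.1, h.1, h.2.1, intertwined_swap h.2.2.2.2⟩

lemma crossPairs_swapR {a b c d : V} (h : CrossPairs pos a b c d) : CrossPairs pos a b d c :=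
  ⟨h.2.1, h.1, h.2.2.2.1, h.2.2.1, h.2.2.2.2.symm⟩

lemma pierces_comm {e : Sym2 V} {a b : V} (h : Pierces pos e a b) : Pierces pos e b a := by
  obtain ⟨c, d, he, hc⟩ := h
  exact ⟨c, d, he, crossPairs_swapL pos hc⟩

lemma crossNum_comm (G : SimpleGraph V) (a b : V) :
    crossNum G pos a b = crossNum G pos b a := by
  unfold crossNum
  congr 1
  ext e
  exact ⟨fun ⟨h1, h2⟩ => ⟨h1, pierces_comm pos h2⟩, fun ⟨h1, h2⟩ => ⟨h1, pierces_comm pos h2⟩⟩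

lemma consecutiveAt_comm {a b : V} (h : ConsecutiveAt pos a b) : ConsecutiveAt pos b a := by
  refine ⟨h.1.symm, ?_⟩
  rcases h.2 with h2 | h2
  · exact Or.inl fun x hx1 hx2 => arcBtw_symm.mp (h2 x hx2 hx1)
  · exact Or.inr fun x hx1 hx2 hc => h2 x hx2 hx1 (arcBtw_symm.mp hc)

lemma not_pierces_of_consecutive {a b : V} (h : ConsecutiveAt pos a b) (e : Sym2 V) :
    ¬ Pierces pos e a b := by
  rintro ⟨c, d, he, hac, had, hbc, hbd, hint⟩
  rcases h.2 with h2 | h2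
  · have h1 := h2 c (Ne.symm hac) (Ne.symm hbc)
    have h3 := h2 d (Ne.symm had) (Ne.symm hbd)
    rcases hint with ⟨_, hn⟩ | ⟨_, hn⟩ <;> exact hn (by assumption)
  · have h1 := h2 c (Ne.symm hac) (Ne.symm hbc)
    have h3 := h2 d (Ne.symm had) (Ne.symm hbd)
    rcases hint with ⟨hy, _⟩ | ⟨hy, _⟩ <;> [exact h1 hy; exact h3 hy]

lemma crossNum_eq_zero_of_consecutive (G : SimpleGraph V) {a b : V}
    (h : ConsecutiveAt pos a b) : crossNum G pos a b = 0 := by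
  have : {e ∈ G.edgeSet | Pierces pos e a b} = (∅ : Set (Sym2 V)) := by
    ext e
    simp only [Set.mem_setOf_eq, Set.mem_empty_iff_false, iff_false, not_and]
    exact fun _ => not_pierces_of_consecutive pos h e
  unfold crossNum
  rw [this, Set.ncard_empty]

end Basics
section ConsecEdge

variable {V : Type*} {pos : V → ℝ}

lemma consec_arc_all {a b x y : V} (hinj : Function.Injective pos)
    (hall : ∀ z, z ≠ a → z ≠ b → ArcBtw (pos z) (pos a) (pos b))
    (hxa : x ≠ a) (hxb : x ≠ b) (hya : y ≠ a) (hyb : y ≠ b) :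
    ¬ ArcBtw (pos a) (pos x) (pos y) := by
  rintro ⟨h1, h2⟩
  have hx := hall x hxa hxb
  have hy := hall y hya hyb
  have hmin : min (pos a) (pos b) < min (pos x) (pos y) := lt_min hx.1 hy.1
  have hmax : max (pos x) (pos y) < max (pos a) (pos b) := max_lt hx.2 hy.2
  rcases le_total (pos a) (pos b) with h | h
  · rw [min_eq_left h] at hmin; linarith
  · rw [max_eq_left h] at hmax; linarith

lemma consec_arc_none {a b x y : V} (hinj : Function.Injective pos)
    (hnone : ∀ z, z ≠ a → z ≠ b → ¬ ArcBtw (pos z) (pos a) (pos b))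
    (hxa : x ≠ a) (hxb : x ≠ b) (hya : y ≠ a) (hyb : y ≠ b) :
    ArcBtw (pos a) (pos x) (pos y) → ArcBtw (pos b) (pos x) (pos y) := by
  rintro ⟨h1, h2⟩
  have hx := hnone x hxa hxb
  have hy := hnone y hya hyb
  simp only [ArcBtw, not_and, not_lt] at hx hy
  -- positions
  set L := min (pos a) (pos b) with hL
  set R := max (pos a) (pos b) with hR
  have hLa : L ≤ pos a := min_le_left _ _
  have hLb' : L ≤ pos b := min_le_right _ _
  have hRa : pos a ≤ R := le_max_left _ _
  have hRb : pos b ≤ R := le_max_right _ _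
  -- the max of pos x, pos y exceeds R
  have hne : ∀ z w, z ≠ w → pos z ≠ pos w := fun z w hzw => fun hp => hzw (hinj hp)
  have hMgtR : R < max (pos x) (pos y) := by
    rcases max_choice (pos x) (pos y) with hM | hM
    · -- max = pos x
      rw [hM]
      have h4 : pos a < pos x := hM ▸ h2
      have : R ≤ pos x := by
        by_contra hc
        push_neg at hc
        have := hx (lt_of_le_of_lt hLa h4)
        linarith
      rcases lt_or_eq_of_le this with h | h
      · exact h
      · exfalso
        rcases max_choice (pos a) (pos b) with h5 | h5 <;> rw [← hR, h] at h5
        · exact hne x a hxa h5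
        · exact hne x b hxb h5
    · rw [hM]
      have h4 : pos a < pos y := hM ▸ h2
      have : R ≤ pos y := by
        by_contra hc
        push_neg at hc
        have := hy (lt_of_le_of_lt hLa h4)
        linarith
      rcases lt_or_eq_of_le this with h | h
      · exact h
      · exfalso
        rcases max_choice (pos a) (pos b) with h5 | h5 <;> rw [← hR, h] at h5
        · exact hne y a hya h5
        · exact hne y b hyb h5
  have hmltL : min (pos x) (pos y) < L := by
    rcases min_choice (pos x) (pos y) with hM | hM
    · rw [hM]
      have h4 : pos x < pos a := hM ▸ h1
      have : pos x ≤ L := by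
        by_contra hc
        push_neg at hc
        have := hx hc
        linarith
      rcases lt_or_eq_of_le this with h | h
      · exact h
      · exfalso
        rcases min_choice (pos a) (pos b) with h5 | h5 <;> rw [← hL, ← h] at h5
        · exact hne x a hxa h5
        · exact hne x b hxb h5
    · rw [hM]
      have h4 : pos y < pos a := hM ▸ h1
      have : pos y ≤ L := by
        by_contra hc
        push_neg at hc
        have := hy hc
        linarith
      rcases lt_or_eq_of_le this with h | h
      · exact h
      · exfalso
        rcases min_choice (pos a) (pos b) with h5 | h5 <;> rw [← hL, ← h] at h5
        · exact hne y a hya h5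
        · exact hne y b hyb h5
  exact ⟨lt_of_lt_of_le hmltL hLb', lt_of_le_of_lt hRb hMgtR⟩

/-- An edge joining two consecutive vertices pierces nothing. -/
lemma consec_edge_pierces_nothing {a b : V} (hinj : Function.Injective pos)
    (hcons : ConsecutiveAt pos a b) (x y : V) : ¬ Pierces pos (s(a, b)) x y := by
  rintro ⟨c, d, he, hcp⟩
  -- reduce to c = a, d = b
  have hcases : (c = a ∧ d = b) ∨ (c = b ∧ d = a) := by
    rw [Sym2.eq_iff] at he
    tauto
  have hcp' : CrossPairs pos x y a b := by
    rcases hcases with ⟨rfl, rfl⟩ | ⟨rfl, rfl⟩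
    · exact hcp
    · exact crossPairs_swapR pos hcp
  obtain ⟨hxa, hxb, hya, hyb, hint⟩ := hcp'
  have hcons' := consecutiveAt_comm pos hcons
  rcases hcons.2 with h2 | h2
  · have hna := consec_arc_all hinj h2 hxa hxb hya hyb
    have hnb : ¬ ArcBtw (pos b) (pos x) (pos y) := by
      rcases hcons'.2 with h3 | h3
      · exact consec_arc_all hinj h3 hxb hxa hyb hya
      · exfalso
        rcases hint with ⟨hc, _⟩ | ⟨hc, _⟩
        · exact hna hc
        · -- ArcBtw b: use h3 to derive ArcBtw a, contradiction with hna
          exact hna (consec_arc_none hinj h3 hxb hxa hyb hya hc)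
    rcases hint with ⟨hc, _⟩ | ⟨hc, _⟩
    · exact hna hc
    · exact hnb hc
  · have hab := consec_arc_none hinj h2 hxa hxb hya hyb
    have h2' : ∀ z, z ≠ b → z ≠ a → ¬ ArcBtw (pos z) (pos b) (pos a) := by
      intro z hz1 hz2 hc
      exact h2 z hz2 hz1 (arcBtw_symm.mp hc)
    have hba := consec_arc_none hinj h2' hxb hxa hyb hya
    rcases hint with ⟨hc, hn⟩ | ⟨hc, hn⟩
    · exact hn (hab hc)
    · exact hn (hba hc)

end ConsecEdge
section ConsecAdj

variable {V : Type*} {pos : V → ℝ} {G : SimpleGraph V} {k : ℕ}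

lemma pierce_set_sup {a b x y : V} (hab : a ≠ b) (hinj : Function.Injective pos)
    (hcons : ConsecutiveAt pos a b) :
    {e ∈ (G ⊔ SimpleGraph.fromEdgeSet {s(a, b)}).edgeSet | Pierces pos e x y}
      = {e ∈ G.edgeSet | Pierces pos e x y} := by
  ext e
  simp only [Set.mem_setOf_eq, SimpleGraph.edgeSet_sup, SimpleGraph.edgeSet_fromEdgeSet,
    Set.mem_union, Set.mem_diff, Set.mem_singleton_iff]
  constructor
  · rintro ⟨he | ⟨rfl, -⟩, hp⟩
    · exact ⟨he, hp⟩
    · exact absurd hp (consec_edge_pierces_nothing hinj hcons x y)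
  · rintro ⟨he, hp⟩
    exact ⟨Or.inl he, hp⟩

/-- Consecutive vertices of a maximal outer k-planar graph are adjacent. -/
lemma adj_of_consecutive (hmax : IsMaximalOuterkPlanar G k)
    (hdraw : IsOuterkPlanarDrawing G k pos) {a b : V}
    (hcons : ConsecutiveAt pos a b) : G.Adj a b := by
  obtain ⟨hinj, hbound⟩ := hdraw
  by_contra hadj
  refine hmax.2 a b hcons.1 hadj ⟨pos, hinj, ?_⟩
  intro x y hxy
  unfold crossNum
  rw [pierce_set_sup hcons.1 hinj hcons]
  rcases (SimpleGraph.sup_adj _ _ _ _).mp hxy with h | h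
  · exact hbound x y h
  · rw [SimpleGraph.fromEdgeSet_adj] at h
    obtain ⟨hmem, hne⟩ := h
    rw [Set.mem_singleton_iff, Sym2.eq_iff] at hmem
    have hconsxy : ConsecutiveAt pos x y := by
      rcases hmem with ⟨rfl, rfl⟩ | ⟨rfl, rfl⟩
      · exact hcons
      · exact consecutiveAt_comm pos hcons
    have : {e ∈ G.edgeSet | Pierces pos e x y} = (∅ : Set (Sym2 V)) := by
      ext e
      simp only [Set.mem_setOf_eq, Set.mem_empty_iff_false, iff_false, not_and]
      exact fun _ => not_pierces_of_consecutive pos hconsxy e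
    rw [this, Set.ncard_empty]
    exact Nat.zero_le k

end ConsecAdj
section Enum

variable {V : Type*} [Fintype V] {pos : V → ℝ}

/-- A sorted enumeration of the vertices. -/
lemma exists_sorted_enum (hinj : Function.Injective pos) (hpos : 0 < Fintype.card V) :
    ∃ f : ℕ → V,
      (∀ v : V, ∃ x, x < Fintype.card V ∧ f x = v) ∧
      (∀ x y, x < y → y < Fintype.card V → pos (f x) < pos (f y)) := by
  classical
  set n := Fintype.card V with hn
  have hVne : Nonempty V := Fintype.card_pos_iff.mp hpos
  set s : Finset ℝ := Finset.univ.image pos with hs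
  have hcard : s.card = n := by
    rw [hs, Finset.card_image_of_injective _ hinj, Finset.card_univ]
  set oi := s.orderIsoOfFin hcard with hoi
  have hmem : ∀ i : Fin n, ∃ v : V, pos v = (oi i : ℝ) := by
    intro i
    obtain ⟨v, -, hv⟩ := Finset.mem_image.mp (oi i).2
    exact ⟨v, hv⟩
  set f0 : Fin n → V := fun i => Function.invFun pos ((oi i : ℝ)) with hf0
  have hposf0 : ∀ i, pos (f0 i) = (oi i : ℝ) := fun i => Function.invFun_eq (hmem i)
  have hmono0 : ∀ i j : Fin n, i < j → pos (f0 i) < pos (f0 j) := by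
    intro i j hij
    rw [hposf0, hposf0]
    exact_mod_cast oi.strictMono hij
  have hinj0 : Function.Injective f0 := by
    intro i j hij
    rcases lt_trichotomy i j with h | h | h
    · exact absurd (hij ▸ hmono0 i j h) (lt_irrefl _)
    · exact h
    · exact absurd (hij ▸ hmono0 j i h) (lt_irrefl _)
  have hbij : Function.Bijective f0 := by
    rw [Fintype.bijective_iff_injective_and_card]
    exact ⟨hinj0, by simp [hn]⟩
  refine ⟨fun x => if h : x < n then f0 ⟨x, h⟩ else f0 ⟨0, hpos⟩, ?_, ?_⟩
  · intro v
    obtain ⟨i, hi⟩ := hbij.2 v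
    exact ⟨i.1, i.2, by simp [i.2, hi]⟩
  · intro x y hxy hy
    have hx : x < n := hxy.trans hy
    simp only [dif_pos hx, dif_pos hy]
    exact hmono0 _ _ (by exact hxy)

end Enum

section Indexed

variable {V : Type*} {pos : V → ℝ} {G : SimpleGraph V} {n : ℕ} {f : ℕ → V}

/-- The set of edges piercing the chord between `f i` and `f j`. -/
def SLset (G : SimpleGraph V) (pos : V → ℝ) (f : ℕ → V) (i j : ℕ) : Set (Sym2 V) :=
  {e ∈ G.edgeSet | Pierces pos e (f i) (f j)}

lemma crossNum_eq_SL (i j : ℕ) : crossNum G pos (f i) (f j) = (SLset G pos f i j).ncard := rfl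

lemma f_inj_idx (hmono : ∀ x y, x < y → y < n → pos (f x) < pos (f y))
    {x y : ℕ} (hx : x < n) (hy : y < n) (h : f x = f y) : x = y := by
  rcases lt_trichotomy x y with hc | hc | hc
  · exact absurd (h ▸ hmono x y hc hy) (lt_irrefl _)
  · exact hc
  · exact absurd (h ▸ hmono y x hc hx) (lt_irrefl _)

lemma f_ne_idx (hmono : ∀ x y, x < y → y < n → pos (f x) < pos (f y))
    {x y : ℕ} (hx : x < n) (hy : y < n) (h : x ≠ y) : f x ≠ f y :=
  fun hc => h (f_inj_idx hmono hx hy hc)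

lemma arc_iff (hmono : ∀ x y, x < y → y < n → pos (f x) < pos (f y))
    {x y t : ℕ} (hxy : x < y) (hy : y < n) (ht : t < n) :
    ArcBtw (pos (f t)) (pos (f x)) (pos (f y)) ↔ x < t ∧ t < y := by
  have hxyp : pos (f x) < pos (f y) := hmono x y hxy hy
  unfold ArcBtw
  rw [min_eq_left hxyp.le, max_eq_right hxyp.le]
  constructor
  · rintro ⟨h1, h2⟩
    constructor
    · by_contra hc
      push_neg at hc
      rcases lt_or_eq_of_le hc with h | h
      · exact absurd (hmono t x h (hxy.trans hy)) (by linarith)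
      · rw [h] at h1; linarith
    · by_contra hc
      push_neg at hc
      rcases lt_or_eq_of_le hc with h | h
      · exact absurd (hmono y t h ht) (by linarith)
      · rw [h] at h2; linarith
  · rintro ⟨h1, h2⟩
    exact ⟨hmono x t h1 ht, hmono t y h2 hy⟩

lemma crossPairs_intro (hmono : ∀ x y, x < y → y < n → pos (f x) < pos (f y))
    {i j c d : ℕ} (hij : i < j) (hj : j < n) (hc : c < n) (hd : d < n)
    (h1 : i < c) (h2 : c < j) (h3 : d < i ∨ j < d) :
    CrossPairs pos (f i) (f j) (f c) (f d) := by
  have hi : i < n := hij.trans hj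
  refine ⟨f_ne_idx hmono hi hc (by omega), f_ne_idx hmono hi hd (by omega),
    f_ne_idx hmono hj hc (by omega), f_ne_idx hmono hj hd (by omega), ?_⟩
  exact Or.inl ⟨(arc_iff hmono hij hj hc).mpr ⟨h1, h2⟩,
    fun hcon => by have := (arc_iff hmono hij hj hd).mp hcon; omega⟩

lemma mem_SL_intro (hmono : ∀ x y, x < y → y < n → pos (f x) < pos (f y))
    {i j c d : ℕ} (hij : i < j) (hj : j < n) (hc : c < n) (hd : d < n)
    (hadj : G.Adj (f c) (f d)) (h1 : i < c) (h2 : c < j) (h3 : d < i ∨ j < d) :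
    s(f c, f d) ∈ SLset G pos f i j :=
  ⟨G.mem_edgeSet.mpr hadj, f c, f d, rfl,
    crossPairs_intro hmono hij hj hc hd h1 h2 h3⟩

lemma mem_SL_elim (hmono : ∀ x y, x < y → y < n → pos (f x) < pos (f y))
    (hsurj : ∀ v : V, ∃ x, x < n ∧ f x = v)
    {i j : ℕ} (hij : i < j) (hj : j < n) {e : Sym2 V} (he : e ∈ SLset G pos f i j) :
    ∃ c d, c < n ∧ d < n ∧ G.Adj (f c) (f d) ∧ e = s(f c, f d) ∧
      i < c ∧ c < j ∧ (d < i ∨ j < d) := by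
  obtain ⟨hmem, u, v, heq, hu1, hu2, hu3, hu4, hint⟩ := he
  obtain ⟨c, hc, rfl⟩ := hsurj u
  obtain ⟨d, hd, rfl⟩ := hsurj v
  have hi : i < n := hij.trans hj
  have hci : c ≠ i := fun h => hu1 (by rw [h])
  have hcj : c ≠ j := fun h => hu3 (by rw [h])
  have hdi : d ≠ i := fun h => hu2 (by rw [h])
  have hdj : d ≠ j := fun h => hu4 (by rw [h])
  have hadj : G.Adj (f c) (f d) := G.mem_edgeSet.mp (heq ▸ hmem)
  rcases hint with ⟨ha, hb⟩ | ⟨ha, hb⟩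
  · obtain ⟨h1, h2⟩ := (arc_iff hmono hij hj hc).mp ha
    have h3 : ¬ (i < d ∧ d < j) := fun hcon => hb ((arc_iff hmono hij hj hd).mpr hcon)
    exact ⟨c, d, hc, hd, hadj, heq, h1, h2, by omega⟩
  · obtain ⟨h1, h2⟩ := (arc_iff hmono hij hj hd).mp ha
    have h3 : ¬ (i < c ∧ c < j) := fun hcon => hb ((arc_iff hmono hij hj hc).mpr hcon)
    exact ⟨d, c, hd, hc, hadj.symm, heq.trans Sym2.eq_swap, h1, h2, by omega⟩

end Indexed
section Cross

variable {V : Type*} {pos : V → ℝ} {n : ℕ} {f : ℕ → V}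

lemma crossPairs_elim_idx (hmono : ∀ x y, x < y → y < n → pos (f x) < pos (f y))
    {x y c d : ℕ} (hx : x < n) (hy : y < n) (hc : c < n) (hd : d < n)
    (hxy : x < y) (hcd : c < d)
    (h : CrossPairs pos (f x) (f y) (f c) (f d)) :
    (x < c ∧ c < y ∧ y < d) ∨ (c < x ∧ x < d ∧ d < y) := by
  obtain ⟨h1, h2, h3, h4, hint⟩ := h
  have hxc : x ≠ c := fun h => h1 (by rw [h])
  have hxd : x ≠ d := fun h => h2 (by rw [h])
  have hyc : y ≠ c := fun h => h3 (by rw [h])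
  have hyd : y ≠ d := fun h => h4 (by rw [h])
  rcases hint with ⟨ha, hb⟩ | ⟨ha, hb⟩
  · obtain ⟨e1, e2⟩ := (arc_iff hmono hxy hy hc).mp ha
    have e3 : ¬ (x < d ∧ d < y) := fun hcon => hb ((arc_iff hmono hxy hy hd).mpr hcon)
    omega
  · obtain ⟨e1, e2⟩ := (arc_iff hmono hxy hy hd).mp ha
    have e3 : ¬ (x < c ∧ c < y) := fun hcon => hb ((arc_iff hmono hxy hy hc).mpr hcon)
    omega

lemma symCross_iff (hmono : ∀ x y, x < y → y < n → pos (f x) < pos (f y))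
    {x y c d : ℕ} (hx : x < n) (hy : y < n) (hc : c < n) (hd : d < n)
    (hxy : x < y) (hcd : c < d) :
    SymCross pos (s(f x, f y)) (s(f c, f d)) ↔
      (x < c ∧ c < y ∧ y < d) ∨ (c < x ∧ x < d ∧ d < y) := by
  constructor
  · rintro ⟨a, b, u, v, he1, he2, hcp⟩
    have hcp1 : CrossPairs pos (f x) (f y) u v := by
      rcases Sym2.eq_iff.mp he1 with ⟨rfl, rfl⟩ | ⟨rfl, rfl⟩
      · exact hcp
      · exact crossPairs_swapL pos hcp
    have hcp2 : CrossPairs pos (f x) (f y) (f c) (f d) := by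
      rcases Sym2.eq_iff.mp he2 with ⟨rfl, rfl⟩ | ⟨rfl, rfl⟩
      · exact hcp1
      · exact crossPairs_swapR pos hcp1
    exact crossPairs_elim_idx hmono hx hy hc hd hxy hcd hcp2
  · intro h
    refine ⟨f x, f y, f c, f d, rfl, rfl, ?_,?_,?_,?_,?_⟩
    · exact f_ne_idx hmono hx hc (by omega)
    · exact f_ne_idx hmono hx hd (by omega)
    · exact f_ne_idx hmono hy hc (by omega)
    · exact f_ne_idx hmono hy hd (by omega)
    · rcases h with ⟨h1, h2, h3⟩ | ⟨h1, h2, h3⟩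
      · exact Or.inl ⟨(arc_iff hmono hxy hy hc).mpr ⟨h1, h2⟩,
          fun hcon => by have := (arc_iff hmono hxy hy hd).mp hcon; omega⟩
      · exact Or.inr ⟨(arc_iff hmono hxy hy hd).mpr ⟨h2, h3⟩,
          fun hcon => by have := (arc_iff hmono hxy hy hc).mp hcon; omega⟩

lemma consecutive_step (hmono : ∀ x y, x < y → y < n → pos (f x) < pos (f y))
    (hsurj : ∀ v : V, ∃ x, x < n ∧ f x = v)
    {x : ℕ} (hx : x + 1 < n) : ConsecutiveAt pos (f x) (f (x + 1)) := by
  refine ⟨f_ne_idx hmono (by omega) hx (by omega), Or.inr ?_⟩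
  intro v hv1 hv2 hc
  obtain ⟨t, ht, rfl⟩ := hsurj v
  have := (arc_iff hmono (by omega) hx ht).mp hc
  have htx : t ≠ x := fun h => hv1 (by rw [h])
  have htx1 : t ≠ x + 1 := fun h => hv2 (by rw [h])
  omega

lemma consecutive_ends (hmono : ∀ x y, x < y → y < n → pos (f x) < pos (f y))
    (hsurj : ∀ v : V, ∃ x, x < n ∧ f x = v) (hn : 2 ≤ n) :
    ConsecutiveAt pos (f 0) (f (n - 1)) := by
  refine ⟨f_ne_idx hmono (by omega) (by omega) (by omega), Or.inl ?_⟩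
  intro v hv1 hv2
  obtain ⟨t, ht, rfl⟩ := hsurj v
  have ht0 : t ≠ 0 := fun h => hv1 (by rw [h])
  have htn : t ≠ n - 1 := fun h => hv2 (by rw [h])
  exact (arc_iff hmono (by omega) (by omega) ht).mpr (by omega)

lemma not_consecutive_diag (hmono : ∀ x y, x < y → y < n → pos (f x) < pos (f y))
    {x y : ℕ} (hy : y < n) (h2 : x + 2 ≤ y) (hne : ¬ (x = 0 ∧ y = n - 1)) :
    ¬ ConsecutiveAt pos (f x) (f y) := by
  rintro ⟨-, hall | hnone⟩
  · -- find a vertex outside the arc: f 0 if x > 0 else f (n-1)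
    rcases Nat.eq_zero_or_pos x with hx0 | hx0
    · have hyn : y < n - 1 := by omega
      have h := hall (f (n - 1)) (f_ne_idx hmono (by omega) (by omega) (by omega))
        (f_ne_idx hmono (by omega) hy (by omega))
      have := (arc_iff hmono (by omega) hy (by omega)).mp h
      omega
    · have h := hall (f 0) (f_ne_idx hmono (by omega) (by omega) (by omega))
        (f_ne_idx hmono (by omega) hy (by omega))
      have := (arc_iff hmono (by omega) hy (by omega)).mp h
      omega
  · have h := hnone (f (x + 1)) (f_ne_idx hmono (by omega) (by omega) (by omega))
      (f_ne_idx hmono (by omega) hy (by omega))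
    exact h ((arc_iff hmono (by omega) hy (by omega)).mpr (by omega))

end Cross

section Median

lemma median_lemma {α : Type*} (F : Finset α) (ι : α → ℕ) {k : ℕ} (hk : 1 ≤ k)
    (hcard : F.card ≤ 2 * k - 1) (hne : F.Nonempty) :
    ∃ e0 ∈ F, (F.filter (fun e => ι e < ι e0)).card ≤ k - 1 ∧
      (F.filter (fun e => ι e0 < ι e)).card ≤ k - 1 := by
  classical
  by_contra hcon
  push_neg at hcon
  have hcon' : ∀ e ∈ F, (F.filter (fun e' => ι e' < ι e)).card ≤ k - 1 →
      k ≤ (F.filter (fun e' => ι e < ι e')).card := by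
    intro e he h1
    have := hcon e he h1
    omega
  set A := F.filter (fun e => (F.filter (fun e' => ι e' < ι e)).card ≤ k - 1) with hA
  have hAne : A.Nonempty := by
    obtain ⟨e, he, hmin⟩ := F.exists_min_image ι hne
    refine ⟨e, Finset.mem_filter.mpr ⟨he, ?_⟩⟩
    have : F.filter (fun e' => ι e' < ι e) = ∅ := by
      apply Finset.filter_false_of_mem
      intro e' he'
      exact not_lt.mpr (hmin e' he')
    rw [this]
    simp
  obtain ⟨e1, he1A, he1max⟩ := A.exists_max_image ι hAne
  have he1F : e1 ∈ F := (Finset.mem_filter.mp he1A).1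
  have he1small := (Finset.mem_filter.mp he1A).2
  have hbig : k ≤ (F.filter (fun e' => ι e1 < ι e')).card := hcon' e1 he1F he1small
  have hBne : (F.filter (fun e' => ι e1 < ι e')).Nonempty := by
    rw [← Finset.card_pos]; omega
  obtain ⟨e2, he2B, he2min⟩ := (F.filter (fun e' => ι e1 < ι e')).exists_min_image ι hBne
  have he2F : e2 ∈ F := (Finset.mem_filter.mp he2B).1
  have he2gt : ι e1 < ι e2 := (Finset.mem_filter.mp he2B).2
  have he2big : k ≤ (F.filter (fun e' => ι e' < ι e2)).card := by
    by_contra hc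
    push_neg at hc
    have he2A : e2 ∈ A := Finset.mem_filter.mpr ⟨he2F, by omega⟩
    exact absurd (he1max e2 he2A) (by omega)
  have hdisj : Disjoint (F.filter (fun e' => ι e' < ι e2))
      (F.filter (fun e' => ι e1 < ι e')) := by
    rw [Finset.disjoint_left]
    intro e he hmem
    have h1 : ι e < ι e2 := (Finset.mem_filter.mp he).2
    have h2 : ι e1 < ι e := (Finset.mem_filter.mp hmem).2
    exact absurd (he2min e hmem) (by omega)
  have hsub : (F.filter (fun e' => ι e' < ι e2)) ∪ (F.filter (fun e' => ι e1 < ι e')) ⊆ F :=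
    Finset.union_subset (Finset.filter_subset _ _) (Finset.filter_subset _ _)
  have := Finset.card_le_card hsub
  rw [Finset.card_union_of_disjoint hdisj] at this
  omega

end Median
section Split

variable {V : Type*} [Fintype V] {pos : V → ℝ} {G : SimpleGraph V} {k n : ℕ} {f : ℕ → V}

lemma exists_split (hk : 1 ≤ k)
    (hmono : ∀ x y, x < y → y < n → pos (f x) < pos (f y))
    (hsurj : ∀ v : V, ∃ x, x < n ∧ f x = v)
    (hbound : ∀ a b, G.Adj a b → crossNum G pos a b ≤ k)
    (hadjstep : ∀ x, x + 1 < n → G.Adj (f x) (f (x + 1)))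
    {i j : ℕ} (hij : i + 2 ≤ j) (hj : j < n)
    (hC : (SLset G pos f i j).ncard ≤ 2 * k - 1) :
    ∃ m, i < m ∧ m < j ∧ (SLset G pos f i m).ncard ≤ 2 * k - 1 ∧
      (SLset G pos f m j).ncard ≤ 2 * k - 1 := by
  classical
  by_cases hC0 : SLset G pos f i j = ∅
  · -- no edge pierces the link: split at the furthest neighbour of i inside (i,j)
    set M := (Finset.range n).filter (fun t => i < t ∧ t < j ∧ G.Adj (f i) (f t)) with hM
    have hMne : M.Nonempty := by
      refine ⟨i + 1, Finset.mem_filter.mpr ⟨Finset.mem_range.mpr (by omega), by omega, by omega, ?_⟩⟩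
      exact hadjstep i (by omega)
    set m := M.max' hMne with hm
    obtain ⟨-, him, hmj, hadjm⟩ := Finset.mem_filter.mp (M.max'_mem hMne)
    have hmlt : ∀ t, i < t → t < j → G.Adj (f i) (f t) → t ≤ m := by
      intro t h1 h2 h3
      exact M.le_max' t (Finset.mem_filter.mpr ⟨Finset.mem_range.mpr (by omega), h1, h2, h3⟩)
    have hg : (SLset G pos f i m).ncard ≤ k := by
      rw [← crossNum_eq_SL]
      exact hbound _ _ hadjm
    have hsub : SLset G pos f m j ⊆ SLset G pos f i m := by
      intro e he
      obtain ⟨c, d, hc, hd, hadj, heq, h1, h2, h3⟩ := mem_SL_elim hmono hsurj hmj hj he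
      rcases h3 with h3 | h3
      · rcases Nat.lt_trichotomy d i with h4 | h4 | h4
        · exfalso
          have : e ∈ SLset G pos f i j :=
            heq ▸ mem_SL_intro hmono (by omega) hj hc hd hadj (by omega) (by omega) (Or.inl h4)
          rw [hC0] at this
          exact this
        · exfalso
          subst h4
          exact absurd (hmlt c (by omega) h2 hadj.symm) (by omega)
        · rw [heq, Sym2.eq_swap]
          exact mem_SL_intro hmono him (by omega) hd hc hadj.symm h4 (by omega) (Or.inr h1)
      · exfalso
        have : e ∈ SLset G pos f i j :=
          heq ▸ mem_SL_intro hmono (by omega) hj hc hd hadj (by omega) (by omega) (Or.inr h3)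
        rw [hC0] at this
        exact this
    have hh : (SLset G pos f m j).ncard ≤ k :=
      le_trans (Set.ncard_le_ncard hsub (Set.toFinite _)) hg
    exact ⟨m, him, hmj, by omega, by omega⟩
  · -- some edge pierces the link: split at a median interior endpoint
    have hfin : (SLset G pos f i j).Finite := Set.toFinite _
    set F := hfin.toFinset with hF
    have hFne : F.Nonempty := hfin.toFinset_nonempty.mpr (Set.nonempty_iff_ne_empty.mpr hC0)
    have hFcard : F.card = (SLset G pos f i j).ncard := (Set.ncard_eq_toFinset_card _ hfin).symm
    set ι : Sym2 V → ℕ := fun e =>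
      if h : ∃ cd : ℕ × ℕ, cd.1 < n ∧ cd.2 < n ∧ e = s(f cd.1, f cd.2) ∧
        i < cd.1 ∧ cd.1 < j ∧ (cd.2 < i ∨ j < cd.2) then h.choose.1 else 0 with hι
    have iota_eq : ∀ {e : Sym2 V} {c d : ℕ}, c < n → d < n → e = s(f c, f d) →
        i < c → c < j → (d < i ∨ j < d) → ι e = c := by
      intro e c d hc hd heq h1 h2 h3
      have hex : ∃ cd : ℕ × ℕ, cd.1 < n ∧ cd.2 < n ∧ e = s(f cd.1, f cd.2) ∧
          i < cd.1 ∧ cd.1 < j ∧ (cd.2 < i ∨ j < cd.2) := ⟨(c, d), hc, hd, heq, h1, h2, h3⟩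
      rw [hι]
      simp only [dif_pos hex]
      obtain ⟨hc', hd', heq', h1', h2', h3'⟩ := hex.choose_spec
      have heq2 : s(f c, f d) = s(f hex.choose.1, f hex.choose.2) := heq.symm.trans heq'
      rcases Sym2.eq_iff.mp heq2 with ⟨ha, hb⟩ | ⟨ha, hb⟩
      · exact (f_inj_idx hmono hc hc' ha).symm
      · have e1 := f_inj_idx hmono hc hd' ha
        have e2 := f_inj_idx hmono hd hc' hb
        omega
    obtain ⟨e0, he0F, hleft, hright⟩ := median_lemma F ι hk (by omega) hFne
    have he0S : e0 ∈ SLset G pos f i j := hfin.mem_toFinset.mp he0F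
    obtain ⟨c0, d0, hc0, hd0, hadj0, heq0, h01, h02, h03⟩ :=
      mem_SL_elim hmono hsurj (by omega) hj he0S
    have hι0 : ι e0 = c0 := iota_eq hc0 hd0 heq0 h01 h02 h03
    -- the two residual finsets
    set Lf : Finset (Sym2 V) := F.filter (fun e => ι e < ι e0) with hLf
    set Rf : Finset (Sym2 V) := F.filter (fun e => ι e0 < ι e) with hRf
    have hmemL : ∀ {e : Sym2 V} {c d : ℕ}, c < n → d < n → G.Adj (f c) (f d) →
        e = s(f c, f d) → i < c → c < j → (d < i ∨ j < d) → c < c0 → e ∈ (Lf : Set (Sym2 V)) := by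
      intro e c d hc hd hadj heq h1 h2 h3 h4
      simp only [hLf, Finset.coe_filter, Set.mem_setOf_eq]
      refine ⟨hfin.mem_toFinset.mpr
        (heq ▸ mem_SL_intro hmono (by omega) hj hc hd hadj h1 h2 h3), ?_⟩
      rw [hι0, iota_eq hc hd heq h1 h2 h3]
      exact h4
    have hmemR : ∀ {e : Sym2 V} {c d : ℕ}, c < n → d < n → G.Adj (f c) (f d) →
        e = s(f c, f d) → i < c → c < j → (d < i ∨ j < d) → c0 < c → e ∈ (Rf : Set (Sym2 V)) := by
      intro e c d hc hd hadj heq h1 h2 h3 h4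
      simp only [hRf, Finset.coe_filter, Set.mem_setOf_eq]
      refine ⟨hfin.mem_toFinset.mpr
        (heq ▸ mem_SL_intro hmono (by omega) hj hc hd hadj h1 h2 h3), ?_⟩
      rw [hι0, iota_eq hc hd heq h1 h2 h3]
      exact h4
    have hLcard : ((Lf : Set (Sym2 V))).ncard ≤ k - 1 := by
      rw [Set.ncard_coe_finset]; exact hleft
    have hRcard : ((Rf : Set (Sym2 V))).ncard ≤ k - 1 := by
      rw [Set.ncard_coe_finset]; exact hright
    rcases h03 with h03 | h03
    · -- d0 < i : the witness edge goes to the left of the interval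
      have hSL0 : (SLset G pos f d0 c0).ncard ≤ k := by
        rw [← crossNum_eq_SL]
        exact hbound _ _ hadj0.symm
      have hgsub : SLset G pos f i c0 ⊆ SLset G pos f d0 c0 ∪ (Lf : Set (Sym2 V)) := by
        intro e he
        obtain ⟨c, d, hc, hd, hadj, heq, h1, h2, h3⟩ := mem_SL_elim hmono hsurj h01 (by omega) he
        rcases h3 with h3 | h3
        · exact Or.inr (hmemL hc hd hadj heq h1 (by omega) (Or.inl h3) h2)
        · rcases Nat.lt_trichotomy d j with h4 | h4 | h4
          · exact Or.inl (heq ▸ mem_SL_intro hmono (by omega) hc0 hc hd hadj (by omega) h2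
              (Or.inr h3))
          · subst h4
            exact Or.inl (heq ▸ mem_SL_intro hmono (by omega) hc0 hc hd hadj (by omega) h2
              (Or.inr h3))
          · exact Or.inr (hmemL hc hd hadj heq h1 (by omega) (Or.inr h4) h2)
      have hhsub : SLset G pos f c0 j ⊆ SLset G pos f d0 c0 ∪ (Rf : Set (Sym2 V)) := by
        intro e he
        obtain ⟨c, d, hc, hd, hadj, heq, h1, h2, h3⟩ := mem_SL_elim hmono hsurj h02 hj he
        rcases h3 with h3 | h3
        · rcases Nat.lt_trichotomy d i with h4 | h4 | h4
          · exact Or.inr (hmemR hc hd hadj heq (by omega) h2 (Or.inl h4) h1)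
          · subst h4
            refine Or.inl ?_
            rw [heq, Sym2.eq_swap]
            exact mem_SL_intro hmono (by omega) hc0 hd hc hadj.symm (by omega) (by omega)
              (Or.inr h1)
          · refine Or.inl ?_
            rw [heq, Sym2.eq_swap]
            exact mem_SL_intro hmono (by omega) hc0 hd hc hadj.symm (by omega) h3 (Or.inr h1)
        · exact Or.inr (hmemR hc hd hadj heq (by omega) h2 (Or.inr h3) h1)
      refine ⟨c0, h01, h02, ?_, ?_⟩
      · have := le_trans (Set.ncard_le_ncard hgsub (Set.toFinite _)) (Set.ncard_union_le _ _)
        omega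
      · have := le_trans (Set.ncard_le_ncard hhsub (Set.toFinite _)) (Set.ncard_union_le _ _)
        omega
    · -- j < d0 : the witness edge goes to the right of the interval
      have hSL0 : (SLset G pos f c0 d0).ncard ≤ k := by
        rw [← crossNum_eq_SL]
        exact hbound _ _ hadj0
      have hgsub : SLset G pos f i c0 ⊆ SLset G pos f c0 d0 ∪ (Lf : Set (Sym2 V)) := by
        intro e he
        obtain ⟨c, d, hc, hd, hadj, heq, h1, h2, h3⟩ := mem_SL_elim hmono hsurj h01 (by omega) he
        rcases h3 with h3 | h3
        · exact Or.inr (hmemL hc hd hadj heq h1 (by omega) (Or.inl h3) h2)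
        · rcases Nat.lt_trichotomy d j with h4 | h4 | h4
          · refine Or.inl ?_
            rw [heq, Sym2.eq_swap]
            exact mem_SL_intro hmono (by omega) hd0 hd hc hadj.symm h3 (by omega) (Or.inl (by omega))
          · subst h4
            refine Or.inl ?_
            rw [heq, Sym2.eq_swap]
            exact mem_SL_intro hmono (by omega) hd0 hd hc hadj.symm h3 (by omega) (Or.inl (by omega))
          · exact Or.inr (hmemL hc hd hadj heq h1 (by omega) (Or.inr h4) h2)
      have hhsub : SLset G pos f c0 j ⊆ SLset G pos f c0 d0 ∪ (Rf : Set (Sym2 V)) := by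
        intro e he
        obtain ⟨c, d, hc, hd, hadj, heq, h1, h2, h3⟩ := mem_SL_elim hmono hsurj h02 hj he
        rcases h3 with h3 | h3
        · rcases Nat.lt_trichotomy d i with h4 | h4 | h4
          · exact Or.inr (hmemR hc hd hadj heq (by omega) h2 (Or.inl h4) h1)
          · subst h4
            exact Or.inl (heq ▸ mem_SL_intro hmono (by omega) hd0 hc hd hadj h1 (by omega)
              (Or.inl (by omega)))
          · exact Or.inl (heq ▸ mem_SL_intro hmono (by omega) hd0 hc hd hadj h1 (by omega)
              (Or.inl (by omega)))
        · exact Or.inr (hmemR hc hd hadj heq (by omega) h2 (Or.inr h3) h1)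
      refine ⟨c0, h01, h02, ?_, ?_⟩
      · have := le_trans (Set.ncard_le_ncard hgsub (Set.toFinite _)) (Set.ncard_union_le _ _)
        omega
      · have := le_trans (Set.ncard_le_ncard hhsub (Set.toFinite _)) (Set.ncard_union_le _ _)
        omega

end Split
section Build

variable {V : Type*} [Fintype V]

/-- The invariant carried through the recursive triangulation of the polygon
on the vertices `f i, …, f j`. -/
def TriProps (G : SimpleGraph V) (pos : V → ℝ) (f : ℕ → V) (n k i j : ℕ)
    (D : Set (Sym2 V)) : Prop :=
  (∀ e ∈ D, ∃ x y, x < y ∧ y < n ∧ i ≤ x ∧ x + 2 ≤ y ∧ y ≤ j ∧ ¬(x = i ∧ y = j) ∧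
      e = s(f x, f y) ∧ (SLset G pos f x y).ncard ≤ 2 * k - 1) ∧
  (∀ e ∈ D, ∀ e' ∈ D, ¬ SymCross pos e e') ∧
  (∀ x y, i ≤ x → x + 2 ≤ y → y ≤ j → y < n → ¬(x = i ∧ y = j) →
      s(f x, f y) ∉ D → ∃ e ∈ D, SymCross pos e (s(f x, f y)))

variable {pos : V → ℝ} {G : SimpleGraph V} {k n : ℕ} {f : ℕ → V}

lemma build_triangulation (hk : 1 ≤ k)
    (hmono : ∀ x y, x < y → y < n → pos (f x) < pos (f y))
    (hsurj : ∀ v : V, ∃ x, x < n ∧ f x = v)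
    (hbound : ∀ a b, G.Adj a b → crossNum G pos a b ≤ k)
    (hadjstep : ∀ x, x + 1 < n → G.Adj (f x) (f (x + 1))) :
    ∀ (g i j : ℕ), i < j → j < n → j ≤ i + g →
      (SLset G pos f i j).ncard ≤ 2 * k - 1 →
      ∃ D : Set (Sym2 V), TriProps G pos f n k i j D := by
  intro g
  induction g with
  | zero => intro i j h1 _ h3 _; omega
  | succ g ih =>
    intro i j hij hj hle hC
    by_cases h2 : j = i + 1
    · refine ⟨∅, fun e he => absurd he (Set.notMem_empty e), fun e he => absurd he (Set.notMem_empty e), ?_⟩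
      intro x y hx hxy hyj _ _ _
      omega
    · have hij2 : i + 2 ≤ j := by omega
      obtain ⟨m, him, hmj, hCim, hCmj⟩ :=
        exists_split hk hmono hsurj hbound hadjstep hij2 hj hC
      obtain ⟨D1, hP1, hN1, hM1⟩ := ih i m him (by omega) (by omega) hCim
      obtain ⟨D2, hP2, hN2, hM2⟩ := ih m j hmj hj (by omega) hCmj
      set E1 : Set (Sym2 V) := if i + 2 ≤ m then {s(f i, f m)} else ∅ with hE1def
      set E2 : Set (Sym2 V) := if m + 2 ≤ j then {s(f m, f j)} else ∅ with hE2def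
      have hE1elim : ∀ e ∈ E1, e = s(f i, f m) ∧ i + 2 ≤ m := by
        intro e he
        by_cases h : i + 2 ≤ m
        · rw [hE1def, if_pos h] at he; exact ⟨he, h⟩
        · rw [hE1def, if_neg h] at he; exact absurd he (Set.notMem_empty e)
      have hE2elim : ∀ e ∈ E2, e = s(f m, f j) ∧ m + 2 ≤ j := by
        intro e he
        by_cases h : m + 2 ≤ j
        · rw [hE2def, if_pos h] at he; exact ⟨he, h⟩
        · rw [hE2def, if_neg h] at he; exact absurd he (Set.notMem_empty e)
      have hmn : m < n := by omega
      -- zone representations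
      have hrep1 : ∀ e ∈ D1 ∪ E1, ∃ x y, x < y ∧ y < n ∧ i ≤ x ∧ y ≤ m ∧ e = s(f x, f y) := by
        rintro e (he | he)
        · obtain ⟨x, y, a1, a2, a3, a4, a5, a6, a7, a8⟩ := hP1 e he
          exact ⟨x, y, a1, a2, a3, a5, a7⟩
        · obtain ⟨rfl, hfar⟩ := hE1elim e he
          exact ⟨i, m, by omega, hmn, le_refl _, le_refl _, rfl⟩
      have hrep2 : ∀ e ∈ D2 ∪ E2, ∃ x y, x < y ∧ y < n ∧ m ≤ x ∧ y ≤ j ∧ e = s(f x, f y) := by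
        rintro e (he | he)
        · obtain ⟨x, y, a1, a2, a3, a4, a5, a6, a7, a8⟩ := hP2 e he
          exact ⟨x, y, a1, a2, a3, a5, a7⟩
        · obtain ⟨rfl, hfar⟩ := hE2elim e he
          exact ⟨m, j, by omega, hj, le_refl _, le_refl _, rfl⟩
      -- crossing impossibilities
      have hzz : ∀ e ∈ D1 ∪ E1, ∀ e' ∈ D2 ∪ E2, ¬ SymCross pos e e' := by
        intro e he e' he' hs
        obtain ⟨x, y, a1, a2, a3, a4, rfl⟩ := hrep1 e he
        obtain ⟨c, d, b1, b2, b3, b4, rfl⟩ := hrep2 e' he'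
        have := (symCross_iff hmono (by omega) a2 (by omega) b2 a1 b1).mp hs
        omega
      have hzz' : ∀ e ∈ D2 ∪ E2, ∀ e' ∈ D1 ∪ E1, ¬ SymCross pos e e' := by
        intro e he e' he' hs
        obtain ⟨x, y, a1, a2, a3, a4, rfl⟩ := hrep2 e he
        obtain ⟨c, d, b1, b2, b3, b4, rfl⟩ := hrep1 e' he'
        have := (symCross_iff hmono (by omega) a2 (by omega) b2 a1 b1).mp hs
        omega
      have hcE1 : ∀ e ∈ D1 ∪ E1, ¬ SymCross pos e (s(f i, f m)) ∧
          ¬ SymCross pos (s(f i, f m)) e := by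
        intro e he
        obtain ⟨x, y, a1, a2, a3, a4, rfl⟩ := hrep1 e he
        constructor
        · intro hs
          have := (symCross_iff hmono (by omega) a2 (by omega) hmn a1 him).mp hs
          omega
        · intro hs
          have := (symCross_iff hmono (by omega) hmn (by omega) a2 him a1).mp hs
          omega
      have hcE2 : ∀ e ∈ D2 ∪ E2, ¬ SymCross pos e (s(f m, f j)) ∧
          ¬ SymCross pos (s(f m, f j)) e := by
        intro e he
        obtain ⟨x, y, a1, a2, a3, a4, rfl⟩ := hrep2 e he
        constructor
        · intro hs
          have := (symCross_iff hmono (by omega) a2 (by omega) hj a1 hmj).mp hs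
          omega
        · intro hs
          have := (symCross_iff hmono (by omega) hj (by omega) a2 hmj a1).mp hs
          omega
      refine ⟨D1 ∪ D2 ∪ E1 ∪ E2, ?_, ?_, ?_⟩
      · -- representations
        rintro e (((he | he) | he) | he)
        · obtain ⟨x, y, a1, a2, a3, a4, a5, a6, a7, a8⟩ := hP1 e he
          exact ⟨x, y, a1, a2, a3, a4, by omega, by omega, a7, a8⟩
        · obtain ⟨x, y, a1, a2, a3, a4, a5, a6, a7, a8⟩ := hP2 e he
          exact ⟨x, y, a1, a2, by omega, a4, a5, by omega, a7, a8⟩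
        · obtain ⟨rfl, hfar⟩ := hE1elim e he
          exact ⟨i, m, by omega, hmn, le_refl _, hfar, by omega, by omega, rfl, hCim⟩
        · obtain ⟨rfl, hfar⟩ := hE2elim e he
          exact ⟨m, j, by omega, hj, by omega, hfar, le_refl _, by omega, rfl, hCmj⟩
      · -- pairwise non-crossing
        rintro e (((he | he) | he) | he) e' (((he' | he') | he') | he')
        · exact hN1 e he e' he'
        · exact hzz e (Or.inl he) e' (Or.inl he')
        · exact (hE1elim e' he').1 ▸ (hcE1 e (Or.inl he)).1
        · exact hzz e (Or.inl he) e' (Or.inr he')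
        · exact hzz' e (Or.inl he) e' (Or.inl he')
        · exact hN2 e he e' he'
        · exact hzz' e (Or.inl he) e' (Or.inr he')
        · exact (hE2elim e' he').1 ▸ (hcE2 e (Or.inl he)).1
        · exact (hE1elim e he).1 ▸ (hcE1 e' (Or.inl he')).2
        · exact hzz e (Or.inr he) e' (Or.inl he')
        · exact (hE1elim e' he').1 ▸ (hcE1 e (Or.inr he)).1
        · exact hzz e (Or.inr he) e' (Or.inr he')
        · exact hzz' e (Or.inr he) e' (Or.inl he')
        · exact (hE2elim e he).1 ▸ (hcE2 e' (Or.inl he')).2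
        · exact hzz' e (Or.inr he) e' (Or.inr he')
        · exact (hE2elim e' he').1 ▸ (hcE2 e (Or.inr he)).1
      · -- maximality
        intro x y hx hxy hyj hyn hne hnot
        have hnot1 : s(f x, f y) ∉ D1 := fun hc => hnot (Or.inl (Or.inl (Or.inl hc)))
        have hnot2 : s(f x, f y) ∉ D2 := fun hc => hnot (Or.inl (Or.inl (Or.inr hc)))
        rcases Nat.lt_or_ge y (m + 1) with hym | hym
        · -- y ≤ m
          have hym' : y ≤ m := by omega
          by_cases hxeq : x = i ∧ y = m
          · exfalso
            obtain ⟨rfl, rfl⟩ := hxeq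
            exact hnot (Or.inl (Or.inr (by rw [hE1def, if_pos hxy]; rfl)))
          · obtain ⟨e, heD, hcr⟩ := hM1 x y hx hxy hym' hyn hxeq hnot1
            exact ⟨e, Or.inl (Or.inl (Or.inl heD)), hcr⟩
        · rcases Nat.lt_or_ge x m with hxm | hxm
          · -- x < m < y (since y ≥ m+1 and x < m)
            by_cases hxi : x = i
            · subst hxi
              have hyj' : y < j := by
                rcases Nat.lt_or_ge y j with h | h
                · exact h
                · exact absurd ⟨rfl, by omega⟩ hne
              have hmE2 : s(f m, f j) ∈ E2 := by
                rw [hE2def, if_pos (by omega)]; rfl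
              refine ⟨s(f m, f j), Or.inr hmE2, ?_⟩
              exact (symCross_iff hmono hmn hj (by omega) hyn hmj (by omega)).mpr
                (Or.inr ⟨by omega, by omega, by omega⟩)
            · have hmE1 : s(f i, f m) ∈ E1 := by
                rw [hE1def, if_pos (by omega)]; rfl
              refine ⟨s(f i, f m), Or.inl (Or.inr hmE1), ?_⟩
              exact (symCross_iff hmono (by omega) hmn (by omega) hyn him (by omega)).mpr
                (Or.inl ⟨by omega, by omega, by omega⟩)
          · -- m ≤ x
            by_cases hxeq : x = m ∧ y = j
            · exfalso
              obtain ⟨rfl, rfl⟩ := hxeq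
              exact hnot (Or.inr (by rw [hE2def, if_pos hxy]; rfl))
            · obtain ⟨e, heD, hcr⟩ := hM2 x y hxm hxy hyj hyn hxeq hnot2
              exact ⟨e, Or.inl (Or.inl (Or.inr heD)), hcr⟩

end Build
/-- Every maximal outer `k`-planar graph (`k ≥ 1`) with an outer `k`-planar
drawing admits a triangulation of its outer cycle in which every link is
pierced by at most `2k − 1` edges of the graph. -/
theorem triangulation_piercing_le_two_k_sub_one {V : Type*} [Fintype V]
    (G : SimpleGraph V) (k : ℕ) (hk : 1 ≤ k) (hn : 3 ≤ Fintype.card V)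
    (hmax : IsMaximalOuterkPlanar G k)
    (pos : V → ℝ) (hdraw : IsOuterkPlanarDrawing G k pos) :
    ∃ T : PolyTriangulation pos,
      ∀ a b : V, T.IsLink a b → crossNum G pos a b ≤ 2 * k - 1 := by
  classical
  obtain ⟨hinj, hbound⟩ := hdraw
  set n := Fintype.card V with hndef
  obtain ⟨f, hsurj, hmono⟩ := exists_sorted_enum hinj (by omega)
  have hadjstep : ∀ x, x + 1 < n → G.Adj (f x) (f (x + 1)) := fun x hx =>
    adj_of_consecutive hmax ⟨hinj, hbound⟩ (consecutive_step hmono hsurj hx)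
  have hC0 : (SLset G pos f 0 (n - 1)).ncard ≤ 2 * k - 1 := by
    rw [← crossNum_eq_SL,
      crossNum_eq_zero_of_consecutive pos G (consecutive_ends hmono hsurj (by omega))]
    exact Nat.zero_le _
  obtain ⟨D, hP, hN, hM⟩ := build_triangulation hk hmono hsurj hbound hadjstep
    (n - 1) 0 (n - 1) (by omega) (by omega) (by omega) hC0
  refine ⟨⟨D, ?_, hN, ?_⟩, ?_⟩
  · -- diag_proper
    intro e he a b heq
    obtain ⟨x, y, a1, a2, a3, a4, a5, a6, a7, a8⟩ := hP e he
    have hxn : x < n := by omega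
    have hdiag : ¬ ConsecutiveAt pos (f x) (f y) :=
      not_consecutive_diag hmono a2 a4 (by simpa using a6)
    have heq2 : s(f x, f y) = s(a, b) := a7 ▸ heq
    rcases Sym2.eq_iff.mp heq2 with ⟨rfl, rfl⟩ | ⟨rfl, rfl⟩
    · exact ⟨f_ne_idx hmono hxn a2 (by omega), hdiag⟩
    · exact ⟨f_ne_idx hmono a2 hxn (by omega), fun hc => hdiag (consecutiveAt_comm pos hc)⟩
  · -- maximal
    intro a b hab hnc hnot
    obtain ⟨x, hxn, rfl⟩ := hsurj a
    obtain ⟨y, hyn, rfl⟩ := hsurj b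
    have hxy : x ≠ y := fun hc => hab (by rw [hc])
    rcases Nat.lt_or_ge x y with hlt | hge
    · have hstep : x + 2 ≤ y := by
        by_contra hc
        have hy1 : y = x + 1 := by omega
        exact hnc (hy1 ▸ consecutive_step hmono hsurj (hy1 ▸ hyn))
      have hne0 : ¬ (x = 0 ∧ y = n - 1) := by
        rintro ⟨rfl, rfl⟩
        exact hnc (consecutive_ends hmono hsurj (by omega))
      exact hM x y (Nat.zero_le _) hstep (by omega) hyn (by simpa using hne0) hnot
    · have hlt : y < x := by omega
      have hstep : y + 2 ≤ x := by
        by_contra hc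
        have hy1 : x = y + 1 := by omega
        exact hnc (consecutiveAt_comm pos (hy1 ▸ consecutive_step hmono hsurj (hy1 ▸ hxn)))
      have hne0 : ¬ (y = 0 ∧ x = n - 1) := by
        rintro ⟨rfl, rfl⟩
        exact hnc (consecutiveAt_comm pos (consecutive_ends hmono hsurj (by omega)))
      have hnot' : s(f y, f x) ∉ D := by
        rw [Sym2.eq_swap]; exact hnot
      obtain ⟨e, heD, hcr⟩ := hM y x (Nat.zero_le _) hstep (by omega) hxn
        (by simpa using hne0) hnot'
      exact ⟨e, heD, by rwa [Sym2.eq_swap] at hcr⟩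
  · -- the piercing bound for all links
    intro a b hlink
    rcases hlink with hcons | he
    · rw [crossNum_eq_zero_of_consecutive pos G hcons]
      exact Nat.zero_le _
    · obtain ⟨x, y, a1, a2, a3, a4, a5, a6, a7, a8⟩ := hP _ he
      have hxn : x < n := by omega
      rcases Sym2.eq_iff.mp a7 with ⟨rfl, rfl⟩ | ⟨rfl, rfl⟩
      · rw [crossNum_eq_SL]; exact a8
      · rw [crossNum_comm, crossNum_eq_SL]; exact a8
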